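/- Identify ℂ^{m₁+m₂} ⊗ ℂ^n with (m₁+m₂) × n complex matrices, and embed ℂ^{m₁} ⊗ ℂ^n and ℂ^{m₂} ⊗ ℂ^n as the subspaces of matrices supported on the first m₁ rows and last m₂ rows respectively. If S₁ is an unextendible product basis of the first subspace and S₂ is an unextendible product basis of the second, then S₁ ∪ S₂ is an unextendible product basis of ℂ^{m₁+m₂} ⊗ ℂ^n. -/

import Mathlib

/-- The Frobenius (Hilbert–Schmidt) inner product on complex matrices. -/
noncomputable def frob {a b : ℕ} (M N : Matrix (Fin a) (Fin b) ℂ) : ℂ :=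
  ∑ i, ∑ j, star (M i j) * N i j

/-- An unextendible product basis of `ℂ^a ⊗ ℂ^b`, viewed as `a × b` complex
matrices with the Frobenius inner product. -/
def IsUPB {a b : ℕ} (S : Finset (Matrix (Fin a) (Fin b) ℂ)) : Prop :=
  (∀ M ∈ S, M.rank = 1) ∧
  (∀ M ∈ S, ∀ N ∈ S, frob M N = if M = N then 1 else 0) ∧
  S.card < a * b ∧
  ∀ N : Matrix (Fin a) (Fin b) ℂ, N ≠ 0 → (∀ M ∈ S, frob M N = 0) → 2 ≤ N.rank

/-- Embedding of `ℂ^{m₁} ⊗ ℂ^n` as the matrices supported on the first `m₁` rows. -/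
def embedT {m₁ m₂ n : ℕ} (A : Matrix (Fin m₁) (Fin n) ℂ) :
    Matrix (Fin (m₁ + m₂)) (Fin n) ℂ :=
  Matrix.of fun i j => if h : (i : ℕ) < m₁ then A ⟨i, h⟩ j else 0

/-- Embedding of `ℂ^{m₂} ⊗ ℂ^n` as the matrices supported on the last `m₂` rows. -/
def embedB {m₁ m₂ n : ℕ} (A : Matrix (Fin m₂) (Fin n) ℂ) :
    Matrix (Fin (m₁ + m₂)) (Fin n) ℂ :=
  Matrix.of fun i j => if h : (i : ℕ) < m₁ then 0
    else A ⟨(i : ℕ) - m₁, by have := i.isLt; omega⟩ j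

/-! The Frobenius inner product of two `(m₁ + m₂) × n` matrices is the sum of the inner products
of their top `m₁` rows and of their bottom `m₂` rows. Hence both embeddings are isometries with
mutually orthogonal images, and the union is orthonormal. A nonzero matrix orthogonal to the union
has a nonzero top or bottom block, orthogonal to `S₁` resp. `S₂`; that block has rank at least 2
by unextendibility, and deleting rows does not increase rank. -/

section RowBlocks

variable {α : Type*} {m₁ m₂ n : ℕ}

def topRows (N : Matrix (Fin (m₁ + m₂)) (Fin n) α) : Matrix (Fin m₁) (Fin n) α :=
  N.submatrix (Fin.castAdd m₂) id

def bottomRows (N : Matrix (Fin (m₁ + m₂)) (Fin n) α) : Matrix (Fin m₂) (Fin n) α :=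
  N.submatrix (Fin.natAdd m₁) id

theorem eq_zero_of_topRows_of_bottomRows [Zero α] {N : Matrix (Fin (m₁ + m₂)) (Fin n) α}
    (htop : topRows N = 0) (hbot : bottomRows N = 0) : N = 0 := by
  ext i j
  induction i using Fin.addCases with
  | left i => exact congrFun (congrFun htop i) j
  | right i => exact congrFun (congrFun hbot i) j

theorem rank_topRows_le [CommRing α] [StrongRankCondition α]
    (N : Matrix (Fin (m₁ + m₂)) (Fin n) α) : (topRows N).rank ≤ N.rank :=
  Matrix.rank_submatrix_le _ _ _

theorem rank_bottomRows_le [CommRing α] [StrongRankCondition α]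
    (N : Matrix (Fin (m₁ + m₂)) (Fin n) α) : (bottomRows N).rank ≤ N.rank :=
  Matrix.rank_submatrix_le _ _ _

end RowBlocks

section Embeddings

variable {m₁ m₂ n : ℕ}

@[simp]
theorem topRows_embedT (A : Matrix (Fin m₁) (Fin n) ℂ) : topRows (embedT (m₂ := m₂) A) = A := by
  ext i j
  simp [topRows, embedT]

@[simp]
theorem bottomRows_embedT (A : Matrix (Fin m₁) (Fin n) ℂ) :
    bottomRows (embedT (m₂ := m₂) A) = 0 := by
  ext i j
  simp [bottomRows, embedT]

@[simp]
theorem topRows_embedB (B : Matrix (Fin m₂) (Fin n) ℂ) : topRows (embedB (m₁ := m₁) B) = 0 := by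
  ext i j
  simp [topRows, embedB]

@[simp]
theorem bottomRows_embedB (B : Matrix (Fin m₂) (Fin n) ℂ) :
    bottomRows (embedB (m₁ := m₁) B) = B := by
  ext i j
  simp [bottomRows, embedB]

theorem embedT_injective : Function.Injective (embedT (m₁ := m₁) (m₂ := m₂) (n := n)) :=
  Function.LeftInverse.injective topRows_embedT

theorem embedB_injective : Function.Injective (embedB (m₁ := m₁) (m₂ := m₂) (n := n)) :=
  Function.LeftInverse.injective bottomRows_embedB

theorem embedT_mul {k : ℕ} (A : Matrix (Fin m₁) (Fin k) ℂ) (C : Matrix (Fin k) (Fin n) ℂ) :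
    embedT (m₂ := m₂) (A * C) = embedT A * C := by
  ext i j
  by_cases h : (i : ℕ) < m₁ <;> simp [embedT, h, Matrix.mul_apply]

theorem embedB_mul {k : ℕ} (B : Matrix (Fin m₂) (Fin k) ℂ) (C : Matrix (Fin k) (Fin n) ℂ) :
    embedB (m₁ := m₁) (B * C) = embedB B * C := by
  ext i j
  by_cases h : (i : ℕ) < m₁ <;> simp [embedB, h, Matrix.mul_apply]

theorem rank_embedT (A : Matrix (Fin m₁) (Fin n) ℂ) : (embedT (m₂ := m₂) A).rank = A.rank := by
  refine le_antisymm ?_ ?_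
  · calc (embedT (m₂ := m₂) A).rank
          = (embedT (m₂ := m₂) (1 : Matrix (Fin m₁) (Fin m₁) ℂ) * A).rank := by
            rw [← embedT_mul, Matrix.one_mul]
      _ ≤ A.rank := Matrix.rank_mul_le_right _ _
  · simpa using rank_topRows_le (embedT (m₂ := m₂) A)

theorem rank_embedB (B : Matrix (Fin m₂) (Fin n) ℂ) : (embedB (m₁ := m₁) B).rank = B.rank := by
  refine le_antisymm ?_ ?_
  · calc (embedB (m₁ := m₁) B).rank
          = (embedB (m₁ := m₁) (1 : Matrix (Fin m₂) (Fin m₂) ℂ) * B).rank := by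
            rw [← embedB_mul, Matrix.one_mul]
      _ ≤ B.rank := Matrix.rank_mul_le_right _ _
  · simpa using rank_bottomRows_le (embedB (m₁ := m₁) B)

end Embeddings

section Frobenius

variable {m₁ m₂ n : ℕ}

@[simp]
theorem frob_zero_left {a b : ℕ} (N : Matrix (Fin a) (Fin b) ℂ) : frob 0 N = 0 := by
  simp [frob]

@[simp]
theorem frob_zero_right {a b : ℕ} (M : Matrix (Fin a) (Fin b) ℂ) : frob M 0 = 0 := by
  simp [frob]

theorem frob_eq_frob_topRows_add_frob_bottomRows (M N : Matrix (Fin (m₁ + m₂)) (Fin n) ℂ) :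
    frob M N = frob (topRows M) (topRows N) + frob (bottomRows M) (bottomRows N) :=
  Fin.sum_univ_add _

theorem frob_embedT_left (A : Matrix (Fin m₁) (Fin n) ℂ) (N : Matrix (Fin (m₁ + m₂)) (Fin n) ℂ) :
    frob (embedT A) N = frob A (topRows N) := by
  simp [frob_eq_frob_topRows_add_frob_bottomRows]

theorem frob_embedB_left (B : Matrix (Fin m₂) (Fin n) ℂ) (N : Matrix (Fin (m₁ + m₂)) (Fin n) ℂ) :
    frob (embedB B) N = frob B (bottomRows N) := by
  simp [frob_eq_frob_topRows_add_frob_bottomRows]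

end Frobenius

section Orthonormal

variable {a b : ℕ}

def IsFrobOrthonormal (S : Finset (Matrix (Fin a) (Fin b) ℂ)) : Prop :=
  ∀ M ∈ S, ∀ N ∈ S, frob M N = if M = N then 1 else 0

theorem IsFrobOrthonormal.union {S T : Finset (Matrix (Fin a) (Fin b) ℂ)}
    (hS : IsFrobOrthonormal S) (hT : IsFrobOrthonormal T)
    (hST : ∀ M ∈ S, ∀ N ∈ T, frob M N = 0) (hTS : ∀ N ∈ T, ∀ M ∈ S, frob N M = 0) :
    IsFrobOrthonormal (S ∪ T) := by
  have hne : ∀ M ∈ S, ∀ N ∈ T, M ≠ N := by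
    rintro M hM _ hN rfl
    simpa [hST M hM M hN] using hS M hM M hM
  intro M hM N hN
  rcases Finset.mem_union.1 hM with hM | hM <;> rcases Finset.mem_union.1 hN with hN | hN
  · exact hS M hM N hN
  · rw [hST M hM N hN, if_neg (hne M hM N hN)]
  · rw [hTS M hM N hN, if_neg (hne N hN M hM).symm]
  · exact hT M hM N hN

theorem IsFrobOrthonormal.image {c d : ℕ} {S : Finset (Matrix (Fin a) (Fin b) ℂ)}
    (hS : IsFrobOrthonormal S) {f : Matrix (Fin a) (Fin b) ℂ → Matrix (Fin c) (Fin d) ℂ}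
    (hf : Function.Injective f) (hfrob : ∀ A B, frob (f A) (f B) = frob A B) :
    IsFrobOrthonormal (S.image f) := by
  simp only [IsFrobOrthonormal, Finset.mem_image, forall_exists_index, and_imp,
    forall_apply_eq_imp_iff₂]
  intro A hA B hB
  simp only [hfrob, hS A hA B hB, hf.eq_iff]

end Orthonormal

/-- If `S₁` is a UPB of `ℂ^{m₁} ⊗ ℂ^n` and `S₂` is a UPB of `ℂ^{m₂} ⊗ ℂ^n`,
then, embedded as the top and bottom row blocks, their union is a UPB of
`ℂ^{m₁+m₂} ⊗ ℂ^n`. -/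
theorem union_of_row_UPBs_is_UPB {m₁ m₂ n : ℕ}
    (S₁ : Finset (Matrix (Fin m₁) (Fin n) ℂ))
    (S₂ : Finset (Matrix (Fin m₂) (Fin n) ℂ))
    (h₁ : IsUPB S₁) (h₂ : IsUPB S₂) :
    IsUPB (S₁.image (embedT (m₂ := m₂)) ∪ S₂.image (embedB (m₁ := m₁))) := by
  obtain ⟨hrank₁, hon₁, hcard₁, hunext₁⟩ := h₁
  obtain ⟨hrank₂, hon₂, hcard₂, hunext₂⟩ := h₂
  refine ⟨?_, ?_, ?_, ?_⟩
  · simp only [Finset.mem_union, Finset.mem_image]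
    rintro _ (⟨A, hA, rfl⟩ | ⟨B, hB, rfl⟩)
    · rw [rank_embedT, hrank₁ A hA]
    · rw [rank_embedB, hrank₂ B hB]
  · refine IsFrobOrthonormal.union (IsFrobOrthonormal.image hon₁ embedT_injective ?_)
      (IsFrobOrthonormal.image hon₂ embedB_injective ?_) ?_ ?_ <;>
      simp [frob_embedT_left, frob_embedB_left]
  · calc _ ≤ S₁.card + S₂.card :=
          (Finset.card_union_le _ _).trans (add_le_add Finset.card_image_le Finset.card_image_le)
      _ < m₁ * n + m₂ * n := add_lt_add hcard₁ hcard₂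
      _ = (m₁ + m₂) * n := (add_mul _ _ _).symm
  · intro N hN horth
    have htop : ∀ A ∈ S₁, frob A (topRows N) = 0 := fun A hA => by
      rw [← frob_embedT_left]
      exact horth _ (Finset.mem_union_left _ (Finset.mem_image_of_mem _ hA))
    have hbot : ∀ B ∈ S₂, frob B (bottomRows N) = 0 := fun B hB => by
      rw [← frob_embedB_left]
      exact horth _ (Finset.mem_union_right _ (Finset.mem_image_of_mem _ hB))
    by_cases hN₁ : topRows N = 0
    · have hN₂ : bottomRows N ≠ 0 := fun hN₂ => hN (eq_zero_of_topRows_of_bottomRows hN₁ hN₂)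
      exact (hunext₂ _ hN₂ hbot).trans (rank_bottomRows_le N)
    · exact (hunext₁ _ hN₁ htop).trans (rank_topRows_le N)
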